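/- arXiv:1504.00274 — 2 statements merged into one kernel-verified Lean document; each statement's English description precedes it below -/
import Mathlib

section
/- Let f be a monic complex polynomial of degree n ≥ 2 all of whose roots lie on a straight line through the origin, i.e. there exists θ ∈ ℝ such that every root of f is of the form t·e^{iθ} with t ∈ ℝ. Then f = X^n if and only if 0 is a double root of the (n-2)nd derivative of f, i.e. f^{(n-2)}(0) = 0 and f^{(n-1)}(0) = 0. -/
/-!
Up to the factorials, the two conditions say that the coefficients of `X ^ (n - 1)` and
`X ^ (n - 2)` vanish, i.e. that `e₁ = e₂ = 0` for the roots of `f`. Newton's identity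
`∑ zᵢ² = e₁² - 2 e₂` then gives `∑ zᵢ² = 0`. Writing `zᵢ = tᵢ w` with `tᵢ` real and `w ≠ 0`,
this is `w² ∑ tᵢ² = 0`, so every `tᵢ`, hence every root, is `0`, and the monic `f` is `X ^ n`.
-/

open Polynomial

namespace Multiset

section CommSemiring

variable {R : Type*} [CommSemiring R]

theorem esymm_one (s : Multiset R) : s.esymm 1 = s.sum := by
  simp [esymm, powersetCard_one, map_map]

theorem esymm_cons_succ (a : R) (s : Multiset R) (k : ℕ) :
    (a ::ₘ s).esymm (k + 1) = s.esymm (k + 1) + a * s.esymm k := by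
  simp only [esymm, powersetCard_cons, map_add, sum_add, map_map, Function.comp_def, prod_cons,
    sum_map_mul_left]

end CommSemiring

theorem sum_map_sq {R : Type*} [CommRing R] (s : Multiset R) :
    (s.map (· ^ 2)).sum = s.sum ^ 2 - 2 * s.esymm 2 := by
  induction s using Multiset.induction with
  | empty => simp [esymm, powersetCard_zero_right]
  | cons a s ih =>
    rw [map_cons, sum_cons, sum_cons, esymm_cons_succ, esymm_one, ih]
    ring

theorem eq_zero_of_sum_map_sq_eq_zero {R : Type*} [Ring R] [LinearOrder R] [IsStrictOrderedRing R]
    {s : Multiset R} (hs : (s.map (· ^ 2)).sum = 0) : ∀ x ∈ s, x = 0 := by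
  intro x hx
  have hnonneg : ∀ y ∈ s.map (· ^ 2), (0 : R) ≤ y := by
    simp only [mem_map]
    rintro _ ⟨y, -, rfl⟩
    positivity
  exact pow_eq_zero_iff two_ne_zero |>.mp <|
    all_zero_of_le_zero_le_of_sum_eq_zero hnonneg hs _ (mem_map_of_mem _ hx)

theorem eq_zero_of_sum_map_sq_eq_zero_of_forall_mem_line {s : Multiset ℂ} {w : ℂ} (hw : w ≠ 0)
    (hline : ∀ z ∈ s, ∃ t : ℝ, z = t * w) (hs : (s.map (· ^ 2)).sum = 0) :
    ∀ z ∈ s, z = 0 := by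
  obtain ⟨u, hu⟩ : ∃ u : Multiset ℝ, u.map ((↑) : ℝ → ℂ) = s.map (· / w) := by
    refine ⟨s.map fun z ↦ (z / w).re, ?_⟩
    simp only [map_map, Function.comp_def]
    refine map_congr rfl fun z hz ↦ ?_
    obtain ⟨t, rfl⟩ := hline z hz
    simp [hw]
  have hu_sq : (u.map (· ^ 2)).sum = 0 := by
    have hcast : (((u.map (· ^ 2)).sum : ℝ) : ℂ) = (s.map (· ^ 2)).sum / w ^ 2 :=
      calc (((u.map (· ^ 2)).sum : ℝ) : ℂ)
          = ((u.map ((↑) : ℝ → ℂ)).map (· ^ 2)).sum := by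
            rw [← Complex.ofRealHom_eq_coe, map_multiset_sum, map_map, map_map]
            simp
        _ = ((s.map (· / w)).map (· ^ 2)).sum := by rw [hu]
        _ = (s.map (· ^ 2)).sum / w ^ 2 := by
            rw [map_map, ← sum_map_div]
            simp [div_pow]
    rw [hs, zero_div] at hcast
    exact_mod_cast hcast
  intro z hz
  obtain ⟨x, hx, hxz⟩ := mem_map.mp (hu ▸ mem_map_of_mem (· / w) hz)
  rw [eq_zero_of_sum_map_sq_eq_zero hu_sq x hx, Complex.ofReal_zero, eq_comm,
    div_eq_zero_iff] at hxz
  exact hxz.resolve_right hw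

end Multiset

namespace Polynomial

theorem iterate_derivative_eval_zero {R : Type*} [Semiring R] (p : R[X]) (k : ℕ) :
    (derivative^[k] p).eval 0 = k.factorial * p.coeff k := by
  rw [← coeff_zero_eq_eval_zero, coeff_iterate_derivative]
  simp [Nat.descFactorial_self, nsmul_eq_mul]

theorem iterate_derivative_eval_zero_eq_zero_iff {R : Type*} [Semiring R] [CharZero R]
    [NoZeroDivisors R] (p : R[X]) (k : ℕ) :
    (derivative^[k] p).eval 0 = 0 ↔ p.coeff k = 0 := by
  simp [iterate_derivative_eval_zero, Nat.factorial_ne_zero]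

section Monic

variable {R : Type*} [CommRing R] [IsDomain R] {p : R[X]}

theorem Monic.coeff_natDegree_sub_eq_zero_iff (hp : p.Monic)
    (hroots : Multiset.card p.roots = p.natDegree) {k : ℕ} (hk : k ≤ p.natDegree) :
    p.coeff (p.natDegree - k) = 0 ↔ p.roots.esymm k = 0 := by
  rw [coeff_eq_esymm_roots_of_card hroots (Nat.sub_le _ _), Nat.sub_sub_self hk,
    hp.leadingCoeff]
  simp

theorem Monic.eq_X_pow_of_forall_mem_roots_eq_zero (hp : p.Monic)
    (hroots : Multiset.card p.roots = p.natDegree) (hzero : ∀ a ∈ p.roots, a = 0) :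
    p = X ^ p.natDegree := by
  conv_lhs => rw [← C_leadingCoeff_mul_prod_multiset_X_sub_C hroots]
  rw [Multiset.eq_replicate_card.mpr hzero, hp.leadingCoeff, hroots]
  simp

end Monic

end Polynomial

theorem stmt8 (n : ℕ) (hn : 2 ≤ n) (f : Polynomial ℂ) (hf : f.Monic)
    (hdeg : f.natDegree = n)
    (hline : ∃ θ : ℝ, ∀ z : ℂ, f.eval z = 0 →
      ∃ t : ℝ, z = (t : ℂ) * Complex.exp ((θ : ℂ) * Complex.I)) :
    f = Polynomial.X ^ n ↔
      ((Polynomial.derivative^[n - 2] f).eval 0 = 0 ∧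
        (Polynomial.derivative^[n - 1] f).eval 0 = 0) := by
  simp only [iterate_derivative_eval_zero_eq_zero_iff]
  constructor
  · rintro rfl
    simp only [coeff_X_pow]
    constructor <;> exact if_neg (by omega)
  · rintro ⟨h2, h1⟩
    obtain ⟨θ, hθ⟩ := hline
    have hroots : Multiset.card f.roots = f.natDegree :=
      splits_iff_card_roots.mp (IsAlgClosed.splits f)
    have he1 : f.roots.esymm 1 = 0 :=
      (hf.coeff_natDegree_sub_eq_zero_iff hroots (by omega)).mp (hdeg ▸ h1)
    have he2 : f.roots.esymm 2 = 0 :=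
      (hf.coeff_natDegree_sub_eq_zero_iff hroots (by omega)).mp (hdeg ▸ h2)
    have hsq : (f.roots.map (· ^ 2)).sum = 0 := by
      rw [Multiset.sum_map_sq, ← Multiset.esymm_one, he1, he2]
      ring
    have hzero := Multiset.eq_zero_of_sum_map_sq_eq_zero_of_forall_mem_line
      (Complex.exp_ne_zero _) (fun z hz ↦ hθ z ((mem_roots hf.ne_zero).mp hz)) hsq
    rw [← hdeg]
    exact hf.eq_X_pow_of_forall_mem_roots_eq_zero hroots hzero
end

section
/- Let f be a monic complex polynomial of degree n ≥ 2 having n simple roots w_1, ..., w_n (i.e. f is squarefree), let 0 ≤ m ≤ n, let ξ_1^{(m)}, ..., ξ_{n-m}^{(m)} be the roots of f^{(m)} counted with multiplicity, let z_{n-1} be the unique root of f^{(n-1)}, and let z_{n-2} be any root of the quadratic polynomial f^{(n-2)}. Then Σ_{j=1}^{n-m} (ξ_j^{(m)})^2 = Σ_{j=1}^{n} w_j^2 - m(2n - m - 1)(z_{n-1} - z_{n-2})^2 - m·z_{n-1}^2. -/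
/-!
Let `p` have degree `k` and top coefficients `l, a, b`. The linear polynomial `p^(k-1)` has the
single root `c = -a / (k l)`, and the quadratic `p^(k-2)` vanishing at `z` forces
`2 b = -k (k-1) l (z² - 2 c z)`. Vieta's formulas `l Σ r = -a`, `l e₂ = b` then give
`Σ r² = (Σ r)² - 2 e₂ = k (k-1) (c - z)² + k c²`.
The `(n-m-1)`-th and `(n-m-2)`-th derivatives of `f^(m)` are `f^(n-1)` and `f^(n-2)`, so this
applies to every `f^(m)` with the same `c = z₁` and `z = z₂`, and the theorem is the difference of
the cases `k = n - m` and `k = n`.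
-/

open Polynomial
open scoped Nat

theorem Multiset.esymm_cons_succ_s18 {R : Type*} [CommSemiring R] (a : R) (s : Multiset R) (k : ℕ) :
    (a ::ₘ s).esymm (k + 1) = s.esymm (k + 1) + a * s.esymm k := by
  simp only [Multiset.esymm, Multiset.powersetCard_cons, Multiset.map_add, Multiset.sum_add,
    Multiset.map_map, Function.comp_def, Multiset.prod_cons, Multiset.sum_map_mul_left]

theorem Multiset.sum_map_sq_s18 {R : Type*} [CommRing R] (s : Multiset R) :
    (s.map (· ^ 2)).sum = s.sum ^ 2 - 2 * s.esymm 2 := by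
  induction s using Multiset.induction with
  | empty => simp [Multiset.esymm, Multiset.powersetCard_zero_right]
  | cons a s ih =>
    have h1 : s.esymm 1 = s.sum := by simp [Multiset.esymm, Multiset.powersetCard_one]
    rw [Multiset.map_cons, Multiset.sum_cons, Multiset.sum_cons, Multiset.esymm_cons_succ_s18, h1, ih]
    ring

namespace Polynomial

theorem natDegree_iterate_derivative_eq {R : Type*} [Semiring R] [IsAddTorsionFree R]
    (p : R[X]) (k : ℕ) : (derivative^[k] p).natDegree = p.natDegree - k := by
  induction k with
  | zero => rfl
  | succ k ih => rw [Function.iterate_succ_apply', natDegree_derivative, ih, Nat.sub_sub]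

theorem factorial_mul_coeff_iterate_derivative {R : Type*} [CommSemiring R] (p : R[X]) (i j : ℕ) :
    (j ! : R) * (derivative^[i] p).coeff j = ((i + j) ! : R) * p.coeff (i + j) := by
  have h := Nat.factorial_mul_descFactorial (Nat.le_add_right i j)
  rw [Nat.add_sub_cancel_left] at h
  rw [coeff_iterate_derivative, nsmul_eq_mul, ← mul_assoc, add_comm j i]
  exact_mod_cast congrArg (fun x : ℕ => (x : R) * p.coeff (i + j)) h

theorem roots_eq_singleton_of_natDegree_eq_one {K : Type*} [Field K] {p : K[X]}
    (hp : p.natDegree = 1) {z : K} (hz : p.eval z = 0) : p.roots = {z} := by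
  obtain ⟨c, hc⟩ := Multiset.card_eq_one.mp <|
    (splits_iff_card_roots.mp (Splits.of_natDegree_eq_one hp)).trans hp
  have hmem : z ∈ p.roots := mem_roots'.mpr ⟨ne_zero_of_natDegree_gt (hp ▸ Nat.zero_lt_one), hz⟩
  rw [hc, Multiset.mem_singleton] at hmem
  rw [hc, hmem]

theorem eval_iterate_derivative_of_natDegree_eq_succ {R : Type*} [CommRing R] {p : R[X]}
    {d : ℕ} (hp : p.natDegree = d + 1) (z : R) :
    (derivative^[d] p).eval z = d ! * (p.coeff d + (d + 1) * p.leadingCoeff * z) := by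
  have hlt : (derivative^[d] p).natDegree < 2 := by
    have := natDegree_iterate_derivative p d
    omega
  have h0 := factorial_mul_coeff_iterate_derivative p d 0
  have h1 := factorial_mul_coeff_iterate_derivative p d 1
  rw [eval_eq_sum_range' hlt, Finset.sum_range_succ, Finset.sum_range_one, leadingCoeff, hp]
  simp only [Nat.factorial_zero, Nat.cast_one, one_mul, add_zero,
    Nat.factorial_succ, Nat.cast_mul] at h0 h1
  push_cast at h1
  linear_combination h0 + z * h1

theorem two_mul_eval_iterate_derivative_of_natDegree_eq_add_two {R : Type*} [CommRing R]
    {p : R[X]} {d : ℕ} (hp : p.natDegree = d + 2) (z : R) :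
    2 * (derivative^[d] p).eval z = d ! * (2 * p.coeff d + 2 * (d + 1) * p.coeff (d + 1) * z
      + (d + 2) * (d + 1) * p.leadingCoeff * z ^ 2) := by
  have hlt : (derivative^[d] p).natDegree < 3 := by
    have := natDegree_iterate_derivative p d
    omega
  have h0 := factorial_mul_coeff_iterate_derivative p d 0
  have h1 := factorial_mul_coeff_iterate_derivative p d 1
  have h2 := factorial_mul_coeff_iterate_derivative p d 2
  rw [eval_eq_sum_range' hlt, Finset.sum_range_succ, Finset.sum_range_succ, Finset.sum_range_one,
    leadingCoeff, hp]
  simp only [Nat.factorial_zero, Nat.cast_one, one_mul, add_zero,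
    Nat.factorial_succ, Nat.cast_mul] at h0 h1 h2
  push_cast at h1 h2
  linear_combination 2 * h0 + 2 * z * h1 + z ^ 2 * h2

theorem Splits.sum_map_sq_roots_of_eval_iterate_derivative_eq_zero {K : Type*} [Field K]
    [CharZero K] {p : K[X]} (hsplit : p.Splits) {d : ℕ} (hp : p.natDegree = d + 2) {z₁ z₂ : K}
    (hz₁ : (derivative^[d + 1] p).eval z₁ = 0) (hz₂ : (derivative^[d] p).eval z₂ = 0) :
    (p.roots.map (· ^ 2)).sum = (d + 2) * (d + 1) * (z₁ - z₂) ^ 2 + (d + 2) * z₁ ^ 2 := by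
  have hl : p.leadingCoeff ≠ 0 :=
    leadingCoeff_ne_zero.mpr (ne_zero_of_natDegree_gt (n := 0) (by omega))
  have hfac (k : ℕ) : (k ! : K) ≠ 0 := Nat.cast_ne_zero.mpr (Nat.factorial_ne_zero k)
  have hcentroid : p.coeff (d + 1) = -(d + 2) * p.leadingCoeff * z₁ := by
    have h := eval_iterate_derivative_of_natDegree_eq_succ (d := d + 1) hp z₁
    rw [hz₁, eq_comm, mul_eq_zero_iff_left (hfac _)] at h
    push_cast at h
    linear_combination h
  have hquad : 2 * p.coeff d + 2 * (d + 1) * p.coeff (d + 1) * z₂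
      + (d + 2) * (d + 1) * p.leadingCoeff * z₂ ^ 2 = 0 := by
    have h := two_mul_eval_iterate_derivative_of_natDegree_eq_add_two hp z₂
    rwa [hz₂, mul_zero, eq_comm, mul_eq_zero_iff_left (hfac _)] at h
  have hsum : p.coeff (d + 1) = -p.leadingCoeff * p.roots.sum := by
    rw [← hsplit.nextCoeff_eq_neg_sum_roots_mul_leadingCoeff, nextCoeff_of_natDegree_pos (by omega),
      hp]
    rfl
  have hesymm : p.coeff d = p.leadingCoeff * p.roots.esymm 2 := by
    rw [coeff_eq_esymm_roots_of_splits hsplit (by omega), hp, Nat.add_sub_cancel_left]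
    ring
  have hS : p.roots.sum = (d + 2) * z₁ :=
    mul_left_cancel₀ hl (by linear_combination hsum - hcentroid)
  have hE : 2 * p.roots.esymm 2 = (d + 2) * (d + 1) * (2 * z₁ * z₂ - z₂ ^ 2) :=
    mul_left_cancel₀ hl (by linear_combination hquad - 2 * hesymm - 2 * (d + 1) * z₂ * hcentroid)
  rw [Multiset.sum_map_sq_s18, hS, hE]
  ring

theorem sum_map_sq_roots_iterate_derivative {K : Type*} [Field K] [IsAlgClosed K] [CharZero K]
    {f : K[X]} {n m : ℕ} (hf : f.natDegree = n) (hm : m ≤ n) {z₁ z₂ : K}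
    (hz₁ : (derivative^[n - 1] f).eval z₁ = 0) (hz₂ : (derivative^[n - 2] f).eval z₂ = 0) :
    ((derivative^[m] f).roots.map (· ^ 2)).sum =
      ((n : K) - m) * ((n : K) - m - 1) * (z₁ - z₂) ^ 2 + ((n : K) - m) * z₁ ^ 2 := by
  have hdeg : (derivative^[m] f).natDegree = n - m := by
    rw [natDegree_iterate_derivative_eq, hf]
  obtain h | rfl | rfl : m + 2 ≤ n ∨ n = m + 1 ∨ n = m := by omega
  · obtain ⟨d, rfl⟩ := Nat.exists_eq_add_of_le h
    rw [show m + 2 + d - 1 = d + 1 + m by omega, Function.iterate_add_apply] at hz₁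
    rw [show m + 2 + d - 2 = d + m by omega, Function.iterate_add_apply] at hz₂
    rw [(IsAlgClosed.splits _).sum_map_sq_roots_of_eval_iterate_derivative_eq_zero
      (by omega) hz₁ hz₂]
    push_cast
    ring
  · rw [Nat.add_sub_cancel] at hz₁
    rw [roots_eq_singleton_of_natDegree_eq_one (by omega) hz₁]
    simp
  · obtain ⟨c, hc⟩ := natDegree_eq_zero.mp (by simpa using hdeg)
    rw [← hc, roots_C]
    simp

end Polynomial

theorem stmt18_general (n m : ℕ) (f : Polynomial ℂ)
    (hdeg : f.natDegree = n) (hm : m ≤ n) (z₁ z₂ : ℂ)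
    (hz₁ : (Polynomial.derivative^[n - 1] f).eval z₁ = 0)
    (hz₂ : (Polynomial.derivative^[n - 2] f).eval z₂ = 0) :
    (((Polynomial.derivative^[m] f).roots).map (fun x => x ^ 2)).sum =
      ((f.roots).map (fun x => x ^ 2)).sum
        - (m : ℂ) * (2 * (n : ℂ) - (m : ℂ) - 1) * (z₁ - z₂) ^ 2
        - (m : ℂ) * z₁ ^ 2 := by
  have hroots := sum_map_sq_roots_iterate_derivative hdeg (Nat.zero_le n) hz₁ hz₂
  rw [Function.iterate_zero_apply] at hroots
  rw [sum_map_sq_roots_iterate_derivative hdeg hm hz₁ hz₂, hroots]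
  ring

theorem stmt18 (n m : ℕ) (hn : 2 ≤ n) (f : Polynomial ℂ) (hf : f.Monic)
    (hdeg : f.natDegree = n) (hsf : Squarefree f) (hm : m ≤ n) (z₁ z₂ : ℂ)
    (hz₁ : (Polynomial.derivative^[n - 1] f).eval z₁ = 0)
    (hz₂ : (Polynomial.derivative^[n - 2] f).eval z₂ = 0) :
    (((Polynomial.derivative^[m] f).roots).map (fun x => x ^ 2)).sum =
      ((f.roots).map (fun x => x ^ 2)).sum
        - (m : ℂ) * (2 * (n : ℂ) - (m : ℂ) - 1) * (z₁ - z₂) ^ 2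
        - (m : ℂ) * z₁ ^ 2 :=
  stmt18_general n m f hdeg hm z₁ z₂ hz₁ hz₂
end
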